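/- Let G^c = (C, E^c) be a C-DMG and π = ⟨C₁,…,Cₙ⟩ a path in G^c from C₁ ∈ C_X to Cₙ ∈ C_Y that is active given C_W. Fix a linear order ≤_D on C such that every collider on π has a directed path to C_W that is monotone with respect to ≤_D. Define an ADMG G with vertex set V = ⋃_{C ∈ C} {V⁰_C, V¹_C} and edges: V⁰_C → V¹_{C'} for every C → C' ∈ E^c; V⁰_C → V⁰_{C'} for every C → C' ∈ E^c used (in either direction) on π; V¹_C → V¹_{C'} for every C → C' ∈ E^c with C ≤_D C'; and V⁰_C ↔ V⁰_{C'} for every C ↔ C' ∈ E^c. Then G is acyclic, its cluster quotient (with clusters {V⁰_C, V¹_C}) equals G^c, and the path ⟨V⁰_{C₁},…,V⁰_{Cₙ}⟩ is active in G given W = ⋃_{C ∈ C_W} {V⁰_C, V¹_C}. -/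

import Mathlib

/-!
Every cluster edge `c → c'` is represented by `V⁰_c → V¹_c'` and every `c ↔ c'` by
`V⁰_c ↔ V⁰_c'`, and no edge joins two clusters that are not adjacent in `G^c`, so the
quotient is `G^c`.

For acyclicity, rank the vertices: copy 0 before copy 1, copy 0 by decreasing height along
`π` (the height goes up on every backward step of `π` and down on every other step), and
copy 1 by `≤_D`. Directed edges inside copy 0 are edges of `π` traversed along their
direction, hence go downhill; no edge goes from copy 1 to copy 0; edges inside copy 1
increase strictly along `≤_D` because `G^c` has no self-loops. So every edge increases the
rank.

The copied path has the same colliders and non-colliders as `π`, and `V⁰_c ∈ W` iff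
`c ∈ C_W`. A collider `V⁰_c` reaches `W` by stepping to copy 1 along the first edge of its
`≤_D`-monotone directed path to `C_W` and following the rest of that path inside copy 1.
-/

/-- A directed mixed graph: directed edges (`dir`) and bidirected edges (`bi`). -/
structure DMG (V : Type) where
  dir : V → V → Prop
  bi : V → V → Prop

/-- Orientation of a step of a walk: forward directed, backward directed, or bidirected. -/
inductive EdgeType : Type
  | fwd | bwd | bidir

/-- The step relation of a walk for each edge type. -/
def DMG.step {V : Type} (G : DMG V) : EdgeType → V → V → Prop
  | .fwd, a, b => G.dir a b
  | .bwd, a, b => G.dir b a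
  | .bidir, a, b => G.bi a b ∨ G.bi b a

/-- A walk of `n` vertices `v 0, …, v (n-1)` with step types `e 0, …, e (n-2)`. -/
def IsWalk {V : Type} (G : DMG V) (v : ℕ → V) (e : ℕ → EdgeType) (n : ℕ) : Prop :=
  0 < n ∧ ∀ i, i + 1 < n → G.step (e i) (v i) (v (i + 1))

/-- A path: a walk with no repeated vertices. -/
def IsPath {V : Type} (G : DMG V) (v : ℕ → V) (e : ℕ → EdgeType) (n : ℕ) : Prop :=
  IsWalk G v e n ∧ ∀ i j, i < n → j < n → v i = v j → i = j

/-- The step has an arrowhead at its right endpoint. -/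
def headInto : EdgeType → Prop
  | .fwd => True
  | .bwd => False
  | .bidir => True

/-- The step has an arrowhead at its left endpoint. -/
def tailInto : EdgeType → Prop
  | .fwd => False
  | .bwd => True
  | .bidir => True

/-- Position `i` of a walk with step types `e` is a collider:
arrowheads into it from both incident steps. -/
def ColliderAt (e : ℕ → EdgeType) (i : ℕ) : Prop :=
  headInto (e (i - 1)) ∧ tailInto (e i)

/-- `b` is a descendant of `a`: reachable by a (possibly empty) directed path. -/
def Desc {V : Type} (G : DMG V) (a b : V) : Prop :=
  Relation.ReflTransGen G.dir a b

/-- A walk is blocked by `W` if an endpoint is in `W`, or some non-collider on it is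
in `W`, or some collider on it has no descendant in `W`. -/
def Blocked {V : Type} (G : DMG V) (v : ℕ → V) (e : ℕ → EdgeType) (n : ℕ)
    (W : Set V) : Prop :=
  v 0 ∈ W ∨ v (n - 1) ∈ W ∨
    (∃ i, 0 < i ∧ i + 1 < n ∧ ¬ ColliderAt e i ∧ v i ∈ W) ∨
    (∃ i, 0 < i ∧ i + 1 < n ∧ ColliderAt e i ∧ ∀ d, Desc G (v i) d → d ∉ W)

/-- d-separation: every path from `X` to `Y` is blocked by `W`. -/
def dSep {V : Type} (G : DMG V) (X Y W : Set V) : Prop :=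
  ∀ (n : ℕ) (v : ℕ → V) (e : ℕ → EdgeType),
    IsPath G v e n → v 0 ∈ X → v (n - 1) ∈ Y → Blocked G v e n W

/-- The directed part of the graph has no cycles. -/
def Acyclic {V : Type} (G : DMG V) : Prop :=
  ∀ a, ¬ Relation.TransGen G.dir a a

/-- The cluster quotient (C-DMG) of a graph along a cluster map `Cl`. -/
def DMG.quot {V C : Type} (G : DMG V) (Cl : V → C) : DMG C where
  dir a b := ∃ x y, Cl x = a ∧ Cl y = b ∧ G.dir x y
  bi a b := ∃ x y, Cl x = a ∧ Cl y = b ∧ G.bi x y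

/-- The mutilated graph `G_{\overline{A}\underline{B}}`: remove all edges with an
arrowhead into `A` and all directed edges out of `B`. -/
def mutilate {V : Type} (G : DMG V) (A B : Set V) : DMG V where
  dir a b := G.dir a b ∧ b ∉ A ∧ a ∉ B
  bi a b := G.bi a b ∧ a ∉ A ∧ b ∉ A

/-- The two-copy ADMG construction over the clusters: vertices (c, false) and
(c, true); edges (c,false) → (c',true) for every cluster edge c → c';
(c,false) → (c',false) for every cluster edge c → c' used (in either direction)
on the given path; (c,true) → (c',true) for every cluster edge c → c' with
c below c' in the given order; and (c,false) ↔ (c',false) for every bidirected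
cluster edge c ↔ c'. -/
def twoCopy {C : Type} (Gc : DMG C) (p : ℕ → C) (e : ℕ → EdgeType) (n : ℕ)
    (r : C → C → Prop) : DMG (C × Bool) where
  dir a b :=
    (a.2 = false ∧ b.2 = true ∧ Gc.dir a.1 b.1) ∨
    (a.2 = false ∧ b.2 = false ∧ Gc.dir a.1 b.1 ∧
      ∃ i, i + 1 < n ∧
        ((p i = a.1 ∧ p (i + 1) = b.1 ∧ e i = EdgeType.fwd) ∨
         (p i = b.1 ∧ p (i + 1) = a.1 ∧ e i = EdgeType.bwd))) ∨
    (a.2 = true ∧ b.2 = true ∧ Gc.dir a.1 b.1 ∧ r a.1 b.1)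
  bi a b := a.2 = false ∧ b.2 = false ∧ Gc.bi a.1 b.1

open Relation

attribute [ext] DMG

theorem DMG.acyclic_of_rank {V α : Type} (G : DMG V) (s : α → α → Prop) [IsTrans α s]
    [Std.Irrefl s] (rank : V → α) (h : ∀ a b, G.dir a b → s (rank a) (rank b)) :
    Acyclic G := fun a ha =>
  irrefl (rank a) (transGen_eq_self (r := s) ▸ ha.lift rank h)

def EdgeType.rise : EdgeType → ℤ
  | .bwd => 1
  | _ => -1

def pathHeight (e : ℕ → EdgeType) (i : ℕ) : ℤ :=
  ∑ j ∈ Finset.range i, (e j).rise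

theorem pathHeight_succ (e : ℕ → EdgeType) (i : ℕ) :
    pathHeight e (i + 1) = pathHeight e i + (e i).rise :=
  Finset.sum_range_succ _ _

section TwoCopy

variable {C : Type} (Gc : DMG C) (p : ℕ → C) (e : ℕ → EdgeType) (n : ℕ)
  (r : C → C → Prop)

theorem twoCopy_quot : (twoCopy Gc p e n r).quot Prod.fst = Gc := by
  ext a b
  · constructor
    · rintro ⟨x, y, rfl, rfl, ⟨-, -, h⟩ | ⟨-, -, h, -⟩ | ⟨-, -, h, -⟩⟩ <;> exact h
    · exact fun h => ⟨(a, false), (b, true), rfl, rfl, Or.inl ⟨rfl, rfl, h⟩⟩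
  · constructor
    · exact fun ⟨_, _, hx, hy, _, _, h⟩ => hx ▸ hy ▸ h
    · exact fun h => ⟨(a, false), (b, false), rfl, rfl, rfl, rfl, h⟩

/-- Off `π` the height is junk, but directed edges inside copy 0 only join clusters on `π`. -/
noncomputable def twoCopyRank : C × Bool → ℤ ⊕ C
  | (c, false) => .inl (pathHeight e (Function.invFunOn p (Set.Iio n) c))
  | (c, true) => .inr c

variable {Gc p e n r}

theorem twoCopyRank_path (hp : Set.InjOn p (Set.Iio n)) {i : ℕ} (hi : i < n) :
    twoCopyRank p e n (p i, false) = .inl (pathHeight e i) := by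
  rw [twoCopyRank, hp.leftInvOn_invFunOn hi]

theorem twoCopy_dir_rank (hnoself : ∀ c, ¬ Gc.dir c c) (hp : Set.InjOn p (Set.Iio n))
    [IsTrans C r] [Std.Antisymm r] {x y : C × Bool} (hxy : (twoCopy Gc p e n r).dir x y) :
    Sum.Lex (· > ·) (fun a b => r a b ∧ a ≠ b)
      (twoCopyRank p e n x) (twoCopyRank p e n y) := by
  obtain ⟨a, ba⟩ := x
  obtain ⟨b, bb⟩ := y
  rcases hxy with ⟨rfl, rfl, -⟩ | ⟨rfl, rfl, -, i, hi, hstep⟩ | ⟨rfl, rfl, hab, hr⟩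
  · exact .sep _ _
  · rcases hstep with ⟨rfl, rfl, he⟩ | ⟨rfl, rfl, he⟩ <;>
      rw [twoCopyRank_path hp (by omega : i < n), twoCopyRank_path hp hi] <;>
      exact .inl (by simp only [pathHeight_succ, he, EdgeType.rise]; omega)
  · exact .inr ⟨hr, fun h => hnoself a (h ▸ hab)⟩

theorem twoCopy_acyclic (hnoself : ∀ c, ¬ Gc.dir c c) (hp : Set.InjOn p (Set.Iio n))
    [IsTrans C r] [Std.Antisymm r] : Acyclic (twoCopy Gc p e n r) := by
  have : IsTrans C (fun a b => r a b ∧ a ≠ b) :=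
    ⟨fun a b c ⟨hab, hne⟩ ⟨hbc, _⟩ =>
      ⟨_root_.trans hab hbc, fun h => hne (antisymm hab (h ▸ hbc))⟩⟩
  have : Std.Irrefl (fun a b : C => r a b ∧ a ≠ b) := ⟨fun a h => h.2 rfl⟩
  exact DMG.acyclic_of_rank _ _ (twoCopyRank p e n) fun _ _ => twoCopy_dir_rank hnoself hp

theorem twoCopy_reflTransGen_true {m : ℕ} {q : ℕ → C}
    (hq : ∀ k < m, Gc.dir (q k) (q (k + 1)) ∧ r (q k) (q (k + 1))) :
    ReflTransGen (twoCopy Gc p e n r).dir (q 0, true) (q m, true) := by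
  induction m with
  | zero => rfl
  | succ m ih =>
    exact (ih fun k hk => hq k (by omega)).tail (Or.inr (Or.inr ⟨rfl, rfl, hq m (by omega)⟩))

theorem twoCopy_desc_of_monotone_path {m : ℕ} {q : ℕ → C}
    (hq : ∀ k < m, Gc.dir (q k) (q (k + 1)) ∧ r (q k) (q (k + 1))) :
    ∃ b, Desc (twoCopy Gc p e n r) (q 0, false) (q m, b) := by
  cases m with
  | zero => exact ⟨false, .refl⟩
  | succ m =>
    have hjump : (twoCopy Gc p e n r).dir (q 0, false) (q 1, true) :=
      Or.inl ⟨rfl, rfl, (hq 0 (by omega)).1⟩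
    exact ⟨true, .head hjump <| twoCopy_reflTransGen_true (q := fun k => q (k + 1))
      fun k hk => hq (k + 1) (by omega)⟩

theorem twoCopy_not_blocked {CW : Set C} (hact : ¬ Blocked Gc p e n CW)
    (hmono : ∀ i, 0 < i → i + 1 < n → ColliderAt e i →
      ∃ (m : ℕ) (q : ℕ → C), q 0 = p i ∧ q m ∈ CW ∧
        ∀ k, k < m → Gc.dir (q k) (q (k + 1)) ∧ r (q k) (q (k + 1))) :
    ¬ Blocked (twoCopy Gc p e n r) (fun i => (p i, false)) e n {vb : C × Bool | vb.1 ∈ CW} := by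
  rintro (h | h | ⟨i, hi0, hin, hnc, h⟩ | ⟨i, hi0, hin, hc, hall⟩)
  · exact hact (.inl h)
  · exact hact (.inr (.inl h))
  · exact hact (.inr (.inr (.inl ⟨i, hi0, hin, hnc, h⟩)))
  · obtain ⟨m, q, hq0, hqm, hq⟩ := hmono i hi0 hin hc
    obtain ⟨b, hdesc⟩ := twoCopy_desc_of_monotone_path hq
    exact hall _ (hq0 ▸ hdesc) hqm

end TwoCopy

theorem twoCopy_spec_general {C : Type} (Gc : DMG C) (CW : Set C)
    (hnoself : ∀ c, ¬ Gc.dir c c)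
    (p : ℕ → C) (e : ℕ → EdgeType) (n : ℕ)
    (hpath : IsPath Gc p e n)
    (hact : ¬ Blocked Gc p e n CW)
    (r : C → C → Prop) (hlin : IsLinearOrder C r)
    (hmono : ∀ i, 0 < i → i + 1 < n → ColliderAt e i →
      ∃ (m : ℕ) (q : ℕ → C), q 0 = p i ∧ q m ∈ CW ∧
        ∀ k, k < m → Gc.dir (q k) (q (k + 1)) ∧ r (q k) (q (k + 1))) :
    Acyclic (twoCopy Gc p e n r) ∧
    (twoCopy Gc p e n r).quot Prod.fst = Gc ∧
    ¬ Blocked (twoCopy Gc p e n r) (fun i => (p i, false)) e n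
        {vb : C × Bool | vb.1 ∈ CW} :=
  ⟨twoCopy_acyclic hnoself fun i hi j hj h => hpath.2 i j hi hj h,
    twoCopy_quot Gc p e n r, twoCopy_not_blocked hact hmono⟩

/-- for an active path in a C-DMG (without directed self-loops) and a
linear order making the colliders' directed paths into the conditioning clusters
monotone, the two-copy graph is acyclic, its cluster quotient is the C-DMG, and
the copied path is active given the union of the conditioning clusters. -/
theorem twoCopy_spec {C : Type} (Gc : DMG C) (CX CY CW : Set C)
    (hnoself : ∀ c, ¬ Gc.dir c c)
    (p : ℕ → C) (e : ℕ → EdgeType) (n : ℕ)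
    (hpath : IsPath Gc p e n) (hX : p 0 ∈ CX) (hY : p (n - 1) ∈ CY)
    (hact : ¬ Blocked Gc p e n CW)
    (r : C → C → Prop) (hlin : IsLinearOrder C r)
    (hmono : ∀ i, 0 < i → i + 1 < n → ColliderAt e i →
      ∃ (m : ℕ) (q : ℕ → C), q 0 = p i ∧ q m ∈ CW ∧
        ∀ k, k < m → Gc.dir (q k) (q (k + 1)) ∧ r (q k) (q (k + 1))) :
    Acyclic (twoCopy Gc p e n r) ∧
    (twoCopy Gc p e n r).quot Prod.fst = Gc ∧
    ¬ Blocked (twoCopy Gc p e n r) (fun i => (p i, false)) e n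
        {vb : C × Bool | vb.1 ∈ CW} :=
  twoCopy_spec_general Gc CW hnoself p e n hpath hact r hlin hmono
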